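/- arXiv:1005.2605 — 2 statements merged into one kernel-verified Lean document; each statement's English description precedes it below -/
import Mathlib

section
/- (Lenart's Pieri formula, combinatorial form.) Let θ be a nonempty horizontal strip and let r(θ) denote its number of nonempty rows. Then for every integer p, A(θ,p) = (-1)^{|θ|-p} · binom(r(θ)-1, |θ|-p), where binom(a,b) = 0 unless 0 ≤ b ≤ a. -/
/-- The south-east corners of a finite set of boxes: boxes `(i,j)` such that
neither `(i+1,j)` nor `(i,j+1)` belongs to the set. -/
def seCorners (θ : Finset (ℤ × ℤ)) : Finset (ℤ × ℤ) :=
  θ.filter fun b => (b.1 + 1, b.2) ∉ θ ∧ (b.1, b.2 + 1) ∉ θ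

/-- `c(θ)`: the number of nonempty columns of `θ`. -/
def colCount (θ : Finset (ℤ × ℤ)) : ℕ := (θ.image Prod.snd).card

/-- `χ(φ,p) = 1` if `p ≤ c(φ)` and `0` otherwise. -/
def chi (φ : Finset (ℤ × ℤ)) (p : ℤ) : ℤ := if p ≤ (colCount φ : ℤ) then 1 else 0

/-- `A(θ,p) = Σ_S (-1)^{|S|} χ(θ∖S, p)`, the sum over subsets `S` of the set of
south-east corners of `θ`. -/
def Acoef (θ : Finset (ℤ × ℤ)) (p : ℤ) : ℤ :=
  ∑ S ∈ (seCorners θ).powerset, (-1) ^ S.card * chi (θ \ S) p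

/-- A partition in the `m × k` rectangle: a weakly decreasing sequence
`λ_1 ≥ … ≥ λ_m ≥ 0` of integers with `λ_1 ≤ k` (indexed by `1,…,m`). -/
def IsRectPartition (m k : ℕ) (lam : ℤ → ℤ) : Prop :=
  (∀ i j : ℤ, 1 ≤ i → i ≤ j → j ≤ (m : ℤ) → lam j ≤ lam i) ∧
  (∀ i : ℤ, 1 ≤ i → i ≤ (m : ℤ) → 0 ≤ lam i) ∧ lam 1 ≤ (k : ℤ)

/-- The Young diagram `{(i,j) : 1 ≤ i ≤ m, 1 ≤ j ≤ λ_i}` of a partition in the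
`m × k` rectangle. -/
noncomputable def youngD (m k : ℕ) (lam : ℤ → ℤ) : Finset (ℤ × ℤ) :=
  (Finset.Icc (1 : ℤ) (m : ℤ) ×ˢ Finset.Icc (1 : ℤ) (k : ℤ)).filter fun b => b.2 ≤ lam b.1

/-- `θ` is a skew diagram in the `m × k` rectangle: `θ = ν/λ` for partitions
`λ ⊆ ν` in the `m × k` rectangle. -/
def IsSkewDiagram (m k : ℕ) (θ : Finset (ℤ × ℤ)) : Prop :=
  ∃ lam nu : ℤ → ℤ, IsRectPartition m k lam ∧ IsRectPartition m k nu ∧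
    (∀ i : ℤ, 1 ≤ i → i ≤ (m : ℤ) → lam i ≤ nu i) ∧
    θ = youngD m k nu \ youngD m k lam

/-- A horizontal strip contains at most one box in each column. -/
def IsHorizontalStrip (θ : Finset (ℤ × ℤ)) : Prop :=
  ∀ b ∈ θ, ∀ b' ∈ θ, b.2 = b'.2 → b.1 = b'.1

/-- `r(θ)`: the number of nonempty rows of `θ`. -/
def rowCount (θ : Finset (ℤ × ℤ)) : ℕ := (θ.image Prod.fst).card

/-- The binomial coefficient `binom(a,b)` for an integer `b`, which is `0`
unless `0 ≤ b ≤ a`. -/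
def intChoose (a : ℕ) (b : ℤ) : ℤ := if 0 ≤ b then (a.choose b.toNat : ℤ) else 0

/-!
In a horizontal strip every box is alone in its column, so `c(θ ∖ S) = |θ| - |S|` and
`χ(θ ∖ S, p)` only records whether `|S| ≤ |θ| - p`. The rows of a skew diagram are intervals, so
its south-east corners are the rightmost boxes of its rows, `r = r(θ)` of them. Hence `A(θ,p)` is
the partial alternating sum `Σ_{j ≤ |θ|-p} (-1)^j binom(r, j) = (-1)^{|θ|-p} binom(r-1, |θ|-p)`.
-/

open Finset

theorem Finset.sum_powerset_filter_card_le_neg_one_pow {α : Type*} {C : Finset α}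
    (hC : C.Nonempty) (t : ℕ) :
    ∑ S ∈ C.powerset with S.card ≤ t, (-1 : ℤ) ^ S.card = (-1) ^ t * (C.card - 1).choose t := by
  obtain ⟨n, hn⟩ : ∃ n, C.card = n + 1 := ⟨_, (Nat.succ_pred_eq_of_pos hC.card_pos).symm⟩
  rw [hn, Nat.add_sub_cancel, ← Int.alternating_sum_range_choose_eq_choose, ← hn,
    ← sum_fiberwise_of_maps_to (g := card) (t := range (t + 1))
      fun S hS => mem_range.2 (Nat.lt_succ_of_le (mem_filter.1 hS).2)]
  refine sum_congr rfl fun j hj => ?_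
  have hfiber : {S ∈ {S ∈ C.powerset | S.card ≤ t} | S.card = j} = C.powersetCard j := by
    rw [powersetCard_eq_filter, filter_filter]
    exact filter_congr fun S _ => ⟨And.right, fun h => ⟨h ▸ Nat.le_of_lt_succ (mem_range.1 hj), h⟩⟩
  rw [hfiber, sum_congr rfl fun S hS => by rw [(mem_powersetCard.1 hS).2], sum_const,
    card_powersetCard, nsmul_eq_mul, mul_comm]

section Boxes

variable {θ : Finset (ℤ × ℤ)}

def IsRowConvex (θ : Finset (ℤ × ℤ)) : Prop :=
  ∀ i j j' l : ℤ, (i, j) ∈ θ → (i, j') ∈ θ → j ≤ l → l ≤ j' → (i, l) ∈ θ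

theorem IsSkewDiagram.isRowConvex {m k : ℕ} (h : IsSkewDiagram m k θ) : IsRowConvex θ := by
  obtain ⟨lam, nu, -, -, -, rfl⟩ := h
  intro i j j' l
  simp only [mem_sdiff, youngD, mem_filter, mem_product, mem_Icc]
  omega

theorem seCorners_subset : seCorners θ ⊆ θ := filter_subset _ _

theorem IsRowConvex.le_of_mem_seCorners (h : IsRowConvex θ) {a b : ℤ × ℤ}
    (ha : a ∈ seCorners θ) (hb : b ∈ θ) (hab : a.1 = b.1) : b.2 ≤ a.2 := by
  obtain ⟨haθ, -, hright⟩ := mem_filter.1 ha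
  by_contra! hlt
  exact hright (h a.1 a.2 b.2 (a.2 + 1) haθ (hab ▸ hb) (lt_add_one a.2).le
    (Int.add_one_le_of_lt hlt))

theorem IsRowConvex.injOn_fst_seCorners (h : IsRowConvex θ) :
    Set.InjOn Prod.fst (seCorners θ : Set (ℤ × ℤ)) := fun _ ha _ hb hab =>
  Prod.ext hab <| le_antisymm (h.le_of_mem_seCorners hb (seCorners_subset ha) hab.symm)
    (h.le_of_mem_seCorners ha (seCorners_subset hb) hab)

theorem IsHorizontalStrip.mono {φ : Finset (ℤ × ℤ)} (h : IsHorizontalStrip θ) (hφ : φ ⊆ θ) :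
    IsHorizontalStrip φ := fun b hb b' hb' => h b (hφ hb) b' (hφ hb')

theorem IsHorizontalStrip.colCount_eq_card (h : IsHorizontalStrip θ) : colCount θ = θ.card :=
  card_image_of_injOn fun b hb b' hb' hbb' => Prod.ext (h b hb b' hb' hbb') hbb'

/-- The rightmost box of each row is a corner: nothing lies to its right, and nothing below it
since a horizontal strip has a single box per column. -/
theorem IsHorizontalStrip.image_fst_seCorners (h : IsHorizontalStrip θ) :
    (seCorners θ).image Prod.fst = θ.image Prod.fst := by
  refine (image_subset_image seCorners_subset).antisymm fun i hi => ?_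
  obtain ⟨b, hb, rfl⟩ := mem_image.1 hi
  obtain ⟨c, hc, hcmax⟩ := exists_max_image {x ∈ θ | x.1 = b.1} Prod.snd
    ⟨b, mem_filter.2 ⟨hb, rfl⟩⟩
  obtain ⟨hcθ, hcb⟩ := mem_filter.1 hc
  refine mem_image.2 ⟨c, mem_filter.2 ⟨hcθ, fun hbelow => ?_, fun hright => ?_⟩, hcb⟩
  · have := h _ hbelow c hcθ rfl
    omega
  · have := hcmax _ (mem_filter.2 ⟨hright, hcb⟩)
    omega

theorem card_seCorners_eq_rowCount (hconv : IsRowConvex θ) (hhs : IsHorizontalStrip θ) :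
    (seCorners θ).card = rowCount θ := by
  rw [rowCount, ← hhs.image_fst_seCorners, card_image_of_injOn hconv.injOn_fst_seCorners]

theorem IsHorizontalStrip.chi_sdiff (h : IsHorizontalStrip θ) {S : Finset (ℤ × ℤ)} (hS : S ⊆ θ)
    (p : ℤ) : chi (θ \ S) p = if (S.card : ℤ) ≤ θ.card - p then 1 else 0 := by
  rw [chi, (h.mono sdiff_subset).colCount_eq_card, card_sdiff_of_subset hS,
    Nat.cast_sub (card_le_card hS)]
  exact if_congr (by omega) rfl rfl

theorem IsHorizontalStrip.Acoef_eq_sum (h : IsHorizontalStrip θ) (p : ℤ) :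
    Acoef θ p = ∑ S ∈ (seCorners θ).powerset with (S.card : ℤ) ≤ θ.card - p, (-1) ^ S.card := by
  rw [Acoef, sum_filter]
  refine sum_congr rfl fun S hS => ?_
  rw [h.chi_sdiff ((mem_powerset.1 hS).trans seCorners_subset), mul_ite, mul_one, mul_zero]

end Boxes

theorem Acoef_eq_signed_binomial_general (m k : ℕ)
    (θ : Finset (ℤ × ℤ)) (hθ : IsSkewDiagram m k θ) (hhs : IsHorizontalStrip θ)
    (hne : θ.Nonempty) (p : ℤ) :
    (Acoef θ p : ℚ) =
      (-1 : ℚ) ^ ((θ.card : ℤ) - p) *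
        (intChoose (rowCount θ - 1) ((θ.card : ℤ) - p) : ℚ) := by
  have hcard := card_seCorners_eq_rowCount hθ.isRowConvex hhs
  have hC : (seCorners θ).Nonempty := card_pos.1 (hcard ▸ (hne.image Prod.fst).card_pos)
  rw [hhs.Acoef_eq_sum, intChoose]
  rcases le_or_gt 0 ((θ.card : ℤ) - p) with hp | hp
  · obtain ⟨t, ht⟩ := Int.eq_ofNat_of_zero_le hp
    simp only [ht, Nat.cast_le, sum_powerset_filter_card_le_neg_one_pow hC, hcard,
      Nat.cast_nonneg, if_true, Int.toNat_natCast, zpow_natCast]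
    norm_cast
  · rw [sum_eq_zero fun S hS => absurd (mem_filter.1 hS).2 (by omega), if_neg hp.not_ge]
    simp

/-- Lenart's Pieri formula, combinatorial form: for a nonempty horizontal
strip `θ` and every integer `p`,
`A(θ,p) = (-1)^{|θ|-p} · binom(r(θ)-1, |θ|-p)`. -/
theorem Acoef_eq_signed_binomial (m k : ℕ) (hm : 0 < m) (hk : 0 < k)
    (θ : Finset (ℤ × ℤ)) (hθ : IsSkewDiagram m k θ) (hhs : IsHorizontalStrip θ)
    (hne : θ.Nonempty) (p : ℤ) :
    (Acoef θ p : ℚ) =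
      (-1 : ℚ) ^ ((θ.card : ℤ) - p) *
        (intChoose (rowCount θ - 1) ((θ.card : ℤ) - p) : ℚ) :=
  Acoef_eq_signed_binomial_general m k θ hθ hhs hne p
end

section
/- If θ is a nonempty shifted skew diagram that is not a rim, then B(θ,p) = 0 for every integer p. -/
/-- `hcoef a b = Σ_{j=0}^{min(a,b)} (-1)^j 2^{a-j} binom(a,j)`; it is `0` when `b < 0`. -/
def hcoef (a : ℕ) (b : ℤ) : ℤ :=
  ∑ j ∈ Finset.range (a + 1),
    if (j : ℤ) ≤ b then (-1) ^ j * 2 ^ (a - j) * (a.choose j) else 0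

attribute [local instance] Classical.propDecidable

/-- The south-east rim of `θ`: boxes `(i,j) ∈ θ` such that no box `(i',j') ∈ θ`
has `i' > i` and `j' > j`. -/
def seRim (θ : Finset (ℤ × ℤ)) : Finset (ℤ × ℤ) :=
  θ.filter fun b => ∀ b' ∈ θ, ¬ (b.1 < b'.1 ∧ b.2 < b'.2)

/-- `d(θ)`: the number of boxes in the south-east rim of `θ`. -/
def dRim (θ : Finset (ℤ × ℤ)) : ℕ := (seRim θ).card

/-- `θ` is a rim if it equals its own south-east rim. -/
def IsRim (θ : Finset (ℤ × ℤ)) : Prop := θ = seRim θ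

/-- Two boxes are adjacent (connected) if they share a side. -/
def Adjacent (b b' : ℤ × ℤ) : Prop := |b.1 - b'.1| + |b.2 - b'.2| = 1

/-- `b'` can be reached from `b` by a chain of adjacent boxes of `θ`. -/
def Reach (θ : Finset (ℤ × ℤ)) (b b' : ℤ × ℤ) : Prop :=
  Relation.ReflTransGen (fun x y => y ∈ θ ∧ Adjacent x y) b b'

/-- The connected components of `θ`. -/
noncomputable def comps (θ : Finset (ℤ × ℤ)) : Finset (Finset (ℤ × ℤ)) :=
  θ.image fun b => θ.filter fun b' => Reach θ b b'

/-- `N(θ)`: the number of connected components of `θ`. -/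
noncomputable def Ncomp (θ : Finset (ℤ × ℤ)) : ℕ := (comps θ).card

/-- `N⁻(θ) = max(N(θ) - 1, 0)`. -/
noncomputable def Nminus (θ : Finset (ℤ × ℤ)) : ℕ := Ncomp θ - 1

/-- `N'(θ)`: the number of connected components of `θ` containing no diagonal box. -/
noncomputable def Nprime (θ : Finset (ℤ × ℤ)) : ℕ :=
  ((comps θ).filter fun c => ∀ b ∈ c, b.1 ≠ b.2).card

/-- `B(θ,p) = Σ_S (-1)^{|S|} h(N⁻(θ∖S), d(θ∖S) - p)`, the sum over subsets `S`
of the set of south-east corners of `θ`. -/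
noncomputable def Bcoef (θ : Finset (ℤ × ℤ)) (p : ℤ) : ℤ :=
  ∑ S ∈ (seCorners θ).powerset,
    (-1) ^ S.card * hcoef (Nminus (θ \ S)) ((dRim (θ \ S) : ℤ) - p)

/-- `C(θ,p) = Σ_S (-1)^{|S|} h(N'(θ∖S), d(θ∖S) - p)`, the sum over subsets `S`
of the set of south-east corners of `θ`. -/
noncomputable def Ccoef (θ : Finset (ℤ × ℤ)) (p : ℤ) : ℤ :=
  ∑ S ∈ (seCorners θ).powerset,
    (-1) ^ S.card * hcoef (Nprime (θ \ S)) ((dRim (θ \ S) : ℤ) - p)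

/-- A strict partition with largest part at most `n`, encoded as a function
with `lam i = 0` for `i` beyond the length. -/
def IsStrictPartition (n : ℕ) (lam : ℤ → ℤ) : Prop :=
  lam 1 ≤ (n : ℤ) ∧ (∀ i : ℤ, 1 ≤ i → 0 ≤ lam i) ∧
  (∀ i : ℤ, 1 ≤ i → lam (i + 1) = 0 ∨ lam (i + 1) < lam i)

/-- The shifted Young diagram `{(i,j) : 1 ≤ i ≤ ℓ, i ≤ j ≤ λ_i + i - 1}` of a
strict partition. -/
noncomputable def shiftedD (n : ℕ) (lam : ℤ → ℤ) : Finset (ℤ × ℤ) :=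
  (Finset.Icc (1 : ℤ) (n : ℤ) ×ˢ Finset.Icc (1 : ℤ) (2 * (n : ℤ))).filter
    fun b => b.1 ≤ b.2 ∧ b.2 ≤ lam b.1 + b.1 - 1

/-- `θ` is a shifted skew diagram: `θ = ν/λ` for strict partitions `λ ⊆ ν`
with `ν_1 ≤ n`. -/
def IsShiftedSkewDiagram (n : ℕ) (θ : Finset (ℤ × ℤ)) : Prop :=
  ∃ lam nu : ℤ → ℤ, IsStrictPartition n lam ∧ IsStrictPartition n nu ∧
    (∀ i : ℤ, 1 ≤ i → lam i ≤ nu i) ∧ θ = shiftedD n nu \ shiftedD n lam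

/-!
Fix a south-east corner `c` of `θ` and pair each set `S` of corners avoiding `c` with
`insert c S`: the two terms of `B(θ,p)` carry opposite signs, so they cancel as soon as removing
`c` from `θ \ S` changes neither `N` nor `d`. When `θ` is not a rim such a corner exists: take
the lowest row `r` holding a box with another box strictly south-east of it, and let `c` be the
last box of row `r + 1`. Every neighbour of `c` touches the box diagonally north-west of `c`, so
no component splits, and that box takes the place of `c` in the south-east rim.
-/

open Finset

theorem Finset.sum_powerset_neg_one_pow_card_mul_eq_zero {α R : Type*} [DecidableEq α]
    [CommRing R] {T : Finset α} {c : α} (hc : c ∈ T) {g : Finset α → R}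
    (hg : ∀ S ⊆ T.erase c, g (insert c S) = g S) :
    ∑ S ∈ T.powerset, (-1) ^ S.card * g S = 0 := by
  rw [← insert_erase hc, sum_powerset_insert (notMem_erase c T), ← sum_add_distrib]
  refine sum_eq_zero fun S hS => ?_
  have hcS : c ∉ S := fun h => notMem_erase c T (mem_powerset.1 hS h)
  rw [card_insert_of_notMem hcS, hg S (mem_powerset.1 hS), pow_succ]
  ring

lemma adjacent_iff {a b : ℤ × ℤ} :
    Adjacent a b ↔ (a.1 = b.1 ∧ (a.2 = b.2 + 1 ∨ b.2 = a.2 + 1)) ∨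
      (a.2 = b.2 ∧ (a.1 = b.1 + 1 ∨ b.1 = a.1 + 1)) := by
  unfold Adjacent
  rcases abs_cases (a.1 - b.1) with ⟨h1, _⟩ | ⟨h1, _⟩ <;>
    rcases abs_cases (a.2 - b.2) with ⟨h2, _⟩ | ⟨h2, _⟩ <;> rw [h1, h2] <;> omega

lemma Adjacent.symm {a b : ℤ × ℤ} (h : Adjacent a b) : Adjacent b a := by
  rw [adjacent_iff] at h ⊢
  omega

lemma Adjacent.ne {a b : ℤ × ℤ} (h : Adjacent a b) : a ≠ b := by
  rintro rfl
  rw [adjacent_iff] at h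
  omega

section Reach

variable {θ : Finset (ℤ × ℤ)} {a b : ℤ × ℤ}

lemma Reach.mem (h : Reach θ a b) (ha : a ∈ θ) : b ∈ θ := by
  induction h with
  | refl => exact ha
  | tail _ hstep _ => exact hstep.1

lemma Reach.symm (h : Reach θ a b) (ha : a ∈ θ) : Reach θ b a := by
  induction h with
  | refl => exact .refl
  | tail hav hvw ih => exact .head ⟨Reach.mem hav ha, hvw.2.symm⟩ ih

lemma Reach.mono {ψ : Finset (ℤ × ℤ)} (h : Reach θ a b) (hθψ : θ ⊆ ψ) : Reach ψ a b := by
  induction h with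
  | refl => exact .refl
  | tail _ hstep ih => exact ih.tail ⟨hθψ hstep.1, hstep.2⟩

lemma filter_reach_eq_of_reach (h : Reach θ a b) (ha : a ∈ θ) :
    (θ.filter fun w => Reach θ a w) = θ.filter fun w => Reach θ b w := by
  ext w
  simp only [mem_filter, and_congr_right_iff]
  exact fun _ => ⟨Relation.ReflTransGen.trans (h.symm ha), h.trans⟩

end Reach

section EraseBox

variable {φ : Finset (ℤ × ℤ)} {c x : ℤ × ℤ}

lemma reach_erase_of_reach (hx : x ∈ φ.erase c)
    (hnbr : ∀ u ∈ φ, Adjacent u c → Reach (φ.erase c) x u) {a w : ℤ × ℤ} (ha : a ∈ φ)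
    (hac : a ≠ c) (h : Reach φ a w) (hwc : w ≠ c) : Reach (φ.erase c) a w := by
  suffices (w ≠ c → Reach (φ.erase c) a w) ∧
      (w = c → ∃ u ∈ φ, Adjacent u c ∧ Reach (φ.erase c) a u) from this.1 hwc
  clear hwc
  induction h with
  | refl => exact ⟨fun _ => .refl, fun h => absurd h hac⟩
  | @tail v w hav hvw ih =>
    by_cases hvc : v = c
    · obtain ⟨u, hu, huc, hau⟩ := ih.2 hvc
      have hwc : Adjacent w c := hvc ▸ hvw.2.symm
      exact ⟨fun _ => hau.trans (((hnbr u hu huc).symm hx).trans (hnbr w hvw.1 hwc)),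
        fun _ => ⟨u, hu, huc, hau⟩⟩
    · have hav' := ih.1 hvc
      exact ⟨fun hwc => hav'.tail ⟨mem_erase.2 ⟨hwc, hvw.1⟩, hvw.2⟩,
        fun hwc => ⟨v, Reach.mem hav ha, hwc ▸ hvw.2, hav'⟩⟩

lemma Ncomp_erase_eq {y : ℤ × ℤ} (hc : c ∈ φ) (hy : y ∈ φ) (hyc : Adjacent y c)
    (hx : x ∈ φ.erase c) (hnbr : ∀ u ∈ φ, Adjacent u c → Reach (φ.erase c) x u) :
    Ncomp (φ.erase c) = Ncomp φ := by
  set cls : Finset (ℤ × ℤ) → ℤ × ℤ → Finset (ℤ × ℤ) :=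
    fun ψ a => ψ.filter fun w => Reach ψ a w
  have hcls : ∀ a ∈ φ.erase c, cls (φ.erase c) a = (cls φ a).erase c := by
    intro a ha
    obtain ⟨hac, haφ⟩ := mem_erase.1 ha
    ext w
    simp only [cls, mem_filter, mem_erase]
    constructor
    · rintro ⟨⟨hwc, hw⟩, haw⟩
      exact ⟨hwc, hw, haw.mono (erase_subset c φ)⟩
    · rintro ⟨hwc, hw, haw⟩
      exact ⟨⟨hwc, hw⟩, reach_erase_of_reach hx hnbr haφ hac haw hwc⟩
  have himage : (φ.erase c).image (cls φ) = φ.image (cls φ) := by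
    refine (image_subset_image (erase_subset c φ)).antisymm fun C hC => ?_
    obtain ⟨a, ha, rfl⟩ := mem_image.1 hC
    by_cases hac : a = c
    · subst hac
      have hay : Reach φ a y := .single ⟨hy, hyc.symm⟩
      rw [show cls φ a = cls φ y from filter_reach_eq_of_reach hay hc]
      exact mem_image_of_mem _ (mem_erase.2 ⟨hyc.ne, hy⟩)
    · exact mem_image_of_mem _ (mem_erase.2 ⟨hac, ha⟩)
  have hinj : Set.InjOn (fun C : Finset (ℤ × ℤ) => C.erase c) ↑((φ.erase c).image (cls φ)) := by
    intro C₁ hC₁ C₂ hC₂ hC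
    obtain ⟨a₁, ha₁, rfl⟩ := mem_image.1 (mem_coe.1 hC₁)
    obtain ⟨a₂, ha₂, rfl⟩ := mem_image.1 (mem_coe.1 hC₂)
    have ha₁' : a₁ ∈ (cls φ a₁).erase c :=
      mem_erase.2 ⟨(mem_erase.1 ha₁).1, mem_filter.2 ⟨(mem_erase.1 ha₁).2, .refl⟩⟩
    rw [show (cls φ a₁).erase c = (cls φ a₂).erase c from hC] at ha₁'
    exact (filter_reach_eq_of_reach (mem_filter.1 (mem_of_mem_erase ha₁')).2
      (mem_of_mem_erase ha₂)).symm
  calc Ncomp (φ.erase c) = (((φ.erase c).image (cls φ)).image fun C => C.erase c).card := by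
        rw [Ncomp, comps, image_image]
        exact congrArg card (image_congr hcls)
    _ = ((φ.erase c).image (cls φ)).card := card_image_of_injOn hinj
    _ = Ncomp φ := by rw [himage]; rfl

lemma seRim_erase_eq (hx : x ∈ φ) (hxc : x.1 < c.1 ∧ x.2 < c.2)
    (huniq : ∀ v ∈ φ, x.1 < v.1 → x.2 < v.2 → v = c)
    (hcover : ∀ b ∈ φ, b ≠ x → b.1 < c.1 → b.2 < c.2 →
      ∃ v ∈ φ.erase c, b.1 < v.1 ∧ b.2 < v.2) :
    seRim (φ.erase c) = insert x ((seRim φ).erase c) := by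
  ext b
  simp only [seRim, mem_filter, mem_erase, mem_insert]
  constructor
  · rintro ⟨⟨hbc, hb⟩, hno⟩
    by_cases hbx : b = x
    · exact .inl hbx
    refine .inr ⟨hbc, hb, fun v hv hbv => ?_⟩
    by_cases hvc : v = c
    · subst hvc
      obtain ⟨v', hv', hbv'⟩ := hcover b hb hbx hbv.1 hbv.2
      exact hno v' (mem_erase.1 hv') hbv'
    · exact hno v ⟨hvc, hv⟩ hbv
  · rintro (rfl | ⟨hbc, hb, hno⟩)
    · refine ⟨⟨?_, hx⟩, fun v hv hbv => hv.1 (huniq v hv.2 hbv.1 hbv.2)⟩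
      rintro rfl
      exact lt_irrefl _ hxc.1
    · exact ⟨⟨hbc, hb⟩, fun v hv => hno v hv.2⟩

lemma dRim_erase_eq (hc : c ∈ φ) (hx : x ∈ φ) (hxc : x.1 < c.1 ∧ x.2 < c.2)
    (huniq : ∀ v ∈ φ, x.1 < v.1 → x.2 < v.2 → v = c)
    (hcover : ∀ b ∈ φ, b ≠ x → b.1 < c.1 → b.2 < c.2 →
      ∃ v ∈ φ.erase c, b.1 < v.1 ∧ b.2 < v.2) :
    dRim (φ.erase c) = dRim φ := by
  have hcR : c ∈ seRim φ := by
    refine mem_filter.2 ⟨hc, fun v hv hcv => ?_⟩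
    have := huniq v hv (hxc.1.trans hcv.1) (hxc.2.trans hcv.2)
    subst this
    exact lt_irrefl _ hcv.1
  have hxR : x ∉ (seRim φ).erase c := fun h => (mem_filter.1 (mem_of_mem_erase h)).2 c hc hxc
  rw [dRim, dRim, seRim_erase_eq hx hxc huniq hcover, card_insert_of_notMem hxR,
    card_erase_of_mem hcR, Nat.sub_add_cancel (card_pos.2 ⟨c, hcR⟩)]

end EraseBox

structure CancellingCorner (θ : Finset (ℤ × ℤ)) (i j : ℤ) : Prop where
  corner_mem : (i + 1, j) ∈ θ
  left_mem : (i, j - 1) ∈ θ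
  above_mem : (i, j) ∈ θ
  eq_corner_of_southeast : ∀ v ∈ θ, i < v.1 → j - 1 < v.2 → v = (i + 1, j)
  below_left_mem : ∀ b, (i, b) ∈ θ → b < j - 1 → (i + 1, j - 1) ∈ θ

lemma notMem_seCorners_of_right_mem {θ : Finset (ℤ × ℤ)} {a b : ℤ} (h : (a, b + 1) ∈ θ) :
    (a, b) ∉ seCorners θ :=
  fun hc => (mem_filter.1 hc).2.2 h

lemma notMem_seCorners_of_below_mem {θ : Finset (ℤ × ℤ)} {a b : ℤ} (h : (a + 1, b) ∈ θ) :
    (a, b) ∉ seCorners θ :=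
  fun hc => (mem_filter.1 hc).2.1 h

namespace CancellingCorner

variable {θ : Finset (ℤ × ℤ)} {i j : ℤ}

lemma corner_mem_seCorners (h : CancellingCorner θ i j) : (i + 1, j) ∈ seCorners θ := by
  refine mem_filter.2 ⟨h.corner_mem, fun hm => ?_, fun hm => ?_⟩
  · have := h.eq_corner_of_southeast _ hm (by simp only; omega) (by simp only; omega)
    simp at this
  · have := h.eq_corner_of_southeast _ hm (by simp only; omega) (by simp only; omega)
    simp at this

lemma sdiff (h : CancellingCorner θ i j) {S : Finset (ℤ × ℤ)} (hS : S ⊆ seCorners θ)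
    (hcS : (i + 1, j) ∉ S) : CancellingCorner (θ \ S) i j where
  corner_mem := mem_sdiff.2 ⟨h.corner_mem, hcS⟩
  left_mem := mem_sdiff.2 ⟨h.left_mem, fun hx =>
    notMem_seCorners_of_right_mem (by rw [sub_add_cancel]; exact h.above_mem) (hS hx)⟩
  above_mem := mem_sdiff.2 ⟨h.above_mem, fun hy =>
    notMem_seCorners_of_below_mem h.corner_mem (hS hy)⟩
  eq_corner_of_southeast v hv := h.eq_corner_of_southeast v (mem_sdiff.1 hv).1
  below_left_mem b hb hbj := mem_sdiff.2 ⟨h.below_left_mem b (mem_sdiff.1 hb).1 hbj, fun hz =>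
    notMem_seCorners_of_right_mem (by rw [sub_add_cancel]; exact h.corner_mem) (hS hz)⟩

lemma adjacent_left_of_adjacent_corner (h : CancellingCorner θ i j) {u : ℤ × ℤ} (hu : u ∈ θ)
    (huc : Adjacent u (i + 1, j)) : Adjacent (i, j - 1) u := by
  have hSE : ¬ (i < u.1 ∧ j - 1 < u.2 ∧ u ≠ (i + 1, j)) :=
    fun ⟨h₁, h₂, hne⟩ => hne (h.eq_corner_of_southeast u hu h₁ h₂)
  obtain ⟨a, b⟩ := u
  rw [adjacent_iff] at huc ⊢
  simp only [ne_eq, Prod.mk.injEq] at hSE huc ⊢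
  omega

lemma Ncomp_erase (h : CancellingCorner θ i j) : Ncomp (θ.erase (i + 1, j)) = Ncomp θ := by
  have hx : (i, j - 1) ∈ θ.erase (i + 1, j) := mem_erase.2 ⟨by simp, h.left_mem⟩
  refine Ncomp_erase_eq h.corner_mem h.above_mem ?_ hx fun u hu huc =>
    .single ⟨mem_erase.2 ⟨huc.ne, hu⟩, h.adjacent_left_of_adjacent_corner hu huc⟩
  rw [adjacent_iff]
  simp

lemma dRim_erase (h : CancellingCorner θ i j) : dRim (θ.erase (i + 1, j)) = dRim θ := by
  refine dRim_erase_eq h.corner_mem h.left_mem (by simp) h.eq_corner_of_southeast ?_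
  rintro ⟨a, b⟩ hb hbx ha hbj
  simp only [ne_eq, Prod.mk.injEq] at ha hbj hbx
  rcases (Int.lt_add_one_iff.1 ha).lt_or_eq with ha | rfl
  · by_cases hb' : b = j - 1
    · exact ⟨(i, j), mem_erase.2 ⟨by simp, h.above_mem⟩, ha, by simp only; omega⟩
    · exact ⟨(i, j - 1), mem_erase.2 ⟨by simp, h.left_mem⟩, ha, by simp only; omega⟩
  · refine ⟨(a + 1, j - 1), mem_erase.2 ⟨by simp, h.below_left_mem b hb (by omega)⟩, ?_, ?_⟩ <;>
      simp only <;> omega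

theorem Bcoef_eq_zero (h : CancellingCorner θ i j) (p : ℤ) : Bcoef θ p = 0 := by
  refine sum_powerset_neg_one_pow_card_mul_eq_zero h.corner_mem_seCorners
    (g := fun S => hcoef (Nminus (θ \ S)) ((dRim (θ \ S) : ℤ) - p)) fun S hS => ?_
  have hS' : S ⊆ seCorners θ := hS.trans (erase_subset _ _)
  have hcS : (i + 1, j) ∉ S := fun hc => (mem_erase.1 (hS hc)).1 rfl
  have hφ := h.sdiff hS' hcS
  simp only [sdiff_insert, Nminus, hφ.Ncomp_erase, hφ.dRim_erase]

end CancellingCorner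

lemma exists_maximal_row_of_not_isRim {θ : Finset (ℤ × ℤ)} (hrim : ¬ IsRim θ) :
    ∃ r j, (r, j) ∈ θ ∧ (∃ v ∈ θ, r < v.1 ∧ j < v.2) ∧
      ∀ w ∈ θ, ∀ v ∈ θ, w.1 < v.1 → w.2 < v.2 → w.1 ≤ r := by
  have hne : (θ \ seRim θ).Nonempty :=
    sdiff_nonempty.2 fun h => hrim (h.antisymm (filter_subset _ _))
  obtain ⟨⟨r, j⟩, hu, hmax⟩ := exists_max_image _ Prod.fst hne
  obtain ⟨huθ, hur⟩ := mem_sdiff.1 hu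
  refine ⟨r, j, huθ, ?_, fun w hw v hv h₁ h₂ =>
    hmax w (mem_sdiff.2 ⟨hw, fun hwr => (mem_filter.1 hwr).2 v hv ⟨h₁, h₂⟩⟩)⟩
  by_contra! hno
  exact hur (mem_filter.2 ⟨huθ, fun v hv h => (hno v hv h.1).not_gt h.2⟩)

section ShiftedSkew

variable {n : ℕ} {lam nu : ℤ → ℤ}

lemma IsStrictPartition.add_sub_le (hf : IsStrictPartition n lam) {s t : ℤ} (hs : 1 ≤ s)
    (hst : s ≤ t) (ht : 1 ≤ lam t) : lam t + (t - s) ≤ lam s := by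
  induction t, hst using Int.leInduction with
  | base => simp
  | succ t hst ih =>
    rcases hf.2.2 t (by omega) with h | h
    · omega
    · have := ih (by omega)
      omega

lemma mem_skew_iff (hlam : IsStrictPartition n lam) (hnu : IsStrictPartition n nu) {a b : ℤ} :
    (a, b) ∈ shiftedD n nu \ shiftedD n lam ↔ 1 ≤ a ∧ lam a + a ≤ b ∧ b < nu a + a := by
  simp only [shiftedD, mem_sdiff, mem_filter, mem_product, mem_Icc, not_and]
  constructor
  · rintro ⟨⟨⟨⟨h₁, h₂⟩, -, h₄⟩, h₅, h₆⟩, h₇⟩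
    have := h₇ ⟨⟨h₁, h₂⟩, by omega, h₄⟩ h₅
    omega
  · rintro ⟨h₁, h₂, h₃⟩
    have := hlam.2.1 a h₁
    have := hnu.add_sub_le le_rfl h₁ (by omega)
    have := hnu.1
    exact ⟨⟨⟨⟨h₁, by omega⟩, by omega, by omega⟩, by omega, by omega⟩, fun _ _ => by omega⟩

lemma add_one_add_one_mem_skew (hlam : IsStrictPartition n lam) (hnu : IsStrictPartition n nu)
    {a b a' b' : ℤ} (hu : (a, b) ∈ shiftedD n nu \ shiftedD n lam)
    (hv : (a', b') ∈ shiftedD n nu \ shiftedD n lam) (ha : a < a') (hb : b < b') :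
    (a + 1, b + 1) ∈ shiftedD n nu \ shiftedD n lam := by
  rw [mem_skew_iff hlam hnu] at hu hv ⊢
  have := hlam.2.1 a hu.1
  have := hlam.2.1 a' hv.1
  have := hnu.add_sub_le (s := a + 1) (by omega) ha (by omega)
  rcases hlam.2.2 a hu.1 with h | h <;> omega

lemma cancellingCorner_of_maximal (hlam : IsStrictPartition n lam)
    (hnu : IsStrictPartition n nu) {r j₀ : ℤ} (hu : (r, j₀) ∈ shiftedD n nu \ shiftedD n lam)
    (hv : (r + 1, j₀ + 1) ∈ shiftedD n nu \ shiftedD n lam)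
    (hmax : ∀ w ∈ shiftedD n nu \ shiftedD n lam, ∀ v ∈ shiftedD n nu \ shiftedD n lam,
      w.1 < v.1 → w.2 < v.2 → w.1 ≤ r) :
    CancellingCorner (shiftedD n nu \ shiftedD n lam) r (nu (r + 1) + r) := by
  rw [mem_skew_iff hlam hnu] at hu hv
  have hlam_r := hlam.2.1 r hu.1
  have hnu_lt : nu (r + 1) < nu r := (hnu.2.2 r hu.1).resolve_left (by omega)
  have hz : r + 2 ≤ nu (r + 1) + r →
      (r + 1, nu (r + 1) + r - 1) ∈ shiftedD n nu \ shiftedD n lam := fun h => by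
    rw [mem_skew_iff hlam hnu]
    rcases hlam.2.2 r hu.1 with h' | h' <;> omega
  have hc : (r + 1, nu (r + 1) + r) ∈ shiftedD n nu \ shiftedD n lam := by
    rw [mem_skew_iff hlam hnu]
    omega
  refine ⟨hc, by rw [mem_skew_iff hlam hnu]; omega, by rw [mem_skew_iff hlam hnu]; omega,
    ?_, fun b hb hbj => hz ?_⟩
  · rintro ⟨a, b⟩ hab ha hb
    simp only at ha hb
    have hab' := (mem_skew_iff hlam hnu).1 hab
    have := hlam.2.1 a hab'.1
    rcases (show r + 1 ≤ a by omega).eq_or_lt with rfl | ha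
    · rw [show b = nu (r + 1) + r by omega]
    · exfalso
      rcases (show nu (r + 1) + r ≤ b by omega).eq_or_lt with rfl | hb
      · have := hmax _ (hz (by omega)) _ hab (by simp only; omega) (by simp only; omega)
        simp only at this
        omega
      · have := hmax _ hc _ hab (by simp only; omega) hb
        simp only at this
        omega
  · have := (mem_skew_iff hlam hnu).1 hb
    omega

theorem IsShiftedSkewDiagram.exists_cancellingCorner {θ : Finset (ℤ × ℤ)}
    (hθ : IsShiftedSkewDiagram n θ) (hrim : ¬ IsRim θ) : ∃ i j, CancellingCorner θ i j := by
  obtain ⟨lam, nu, hlam, hnu, -, rfl⟩ := hθ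
  obtain ⟨r, j₀, hu, ⟨⟨a, b⟩, hv, ha, hb⟩, hmax⟩ := exists_maximal_row_of_not_isRim hrim
  exact ⟨r, _, cancellingCorner_of_maximal hlam hnu hu
    (add_one_add_one_mem_skew hlam hnu hu hv ha hb) hmax⟩

end ShiftedSkew

theorem Bcoef_eq_zero_of_not_rim_general (n : ℕ) (θ : Finset (ℤ × ℤ))
    (hθ : IsShiftedSkewDiagram n θ) (hrim : ¬ IsRim θ)
    (p : ℤ) : Bcoef θ p = 0 := by
  obtain ⟨i, j, h⟩ := hθ.exists_cancellingCorner hrim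
  exact h.Bcoef_eq_zero p

/-- If `θ` is a nonempty shifted skew diagram that is not a rim, then
`B(θ,p) = 0` for every integer `p`. -/
theorem Bcoef_eq_zero_of_not_rim (n : ℕ) (hn : 0 < n) (θ : Finset (ℤ × ℤ))
    (hθ : IsShiftedSkewDiagram n θ) (hne : θ.Nonempty) (hrim : ¬ IsRim θ)
    (p : ℤ) : Bcoef θ p = 0 :=
  Bcoef_eq_zero_of_not_rim_general n θ hθ hrim p
end
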